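/- arXiv:1712.00538 — 2 statements merged into one kernel-verified Lean document; each statement's English description precedes it below -/
import Mathlib

section
/- Let A be a self-adjoint involution on a real inner product space V with complex structure J (J² = -I, J orthogonal, self-adjoint-adjoint ⟨JX,Y⟩ = -⟨X,JY⟩), AJ = -JA. For a unit vector W ∈ V, the following are equivalent: (i) there exists X in the +1-eigenspace of A and t ∈ ℝ with W = cos(t)X + sin(t)JX for a unit X (i.e., AW ∈ ℂW := span{W, JW}); (ii) ⟨AW, W⟩² + ⟨AW, JW⟩² = 1. -/
/-!
Write `e^{tJ} = cos t + sin t J`. Since `AJ = -JA`, `A e^{tJ} = e^{-tJ} A`; hence if `W = e^{tJ} X`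
with `AX = X` then `AW = e^{-2tJ} W`, and conversely if `AW = e^{φJ} W` then `X = e^{(φ/2)J} W` is
fixed by `A`. So `W` is principal iff `AW = e^{φJ} W` for some `φ`, i.e. iff the unit vector `AW`
lies in the plane of the orthonormal pair `W, JW`; by the equality case of Bessel's inequality this
means `⟨AW,W⟩² + ⟨AW,JW⟩² = ‖AW‖² = 1`.
-/

theorem Real.exists_cos_sin_eq_of_sq_add_sq_eq_one {a b : ℝ} (h : a ^ 2 + b ^ 2 = 1) :
    ∃ φ : ℝ, Real.cos φ = a ∧ Real.sin φ = b := by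
  have hnorm : ‖(⟨a, b⟩ : ℂ)‖ = 1 := by
    rw [Complex.norm_def, Complex.normSq_mk, ← sq, ← sq, h, Real.sqrt_one]
  refine ⟨Complex.arg ⟨a, b⟩, ?_, ?_⟩
  · simpa [hnorm] using Complex.norm_mul_cos_arg (⟨a, b⟩ : ℂ)
  · simpa [hnorm] using Complex.norm_mul_sin_arg (⟨a, b⟩ : ℂ)

theorem eq_inner_smul_add_inner_smul_of_norm_sq {V : Type*} [NormedAddCommGroup V]
    [InnerProductSpace ℝ V] {e₁ e₂ u : V} (h₁ : ‖e₁‖ = 1) (h₂ : ‖e₂‖ = 1)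
    (h₁₂ : inner ℝ e₁ e₂ = (0 : ℝ))
    (hu : ‖u‖ ^ 2 = inner ℝ u e₁ ^ 2 + inner ℝ u e₂ ^ 2) :
    u = inner ℝ u e₁ • e₁ + inner ℝ u e₂ • e₂ := by
  rw [← sub_eq_zero, ← inner_self_eq_zero (𝕜 := ℝ)]
  rw [← real_inner_self_eq_norm_sq] at hu
  have he₁ : inner ℝ e₁ e₁ = (1 : ℝ) := by rw [real_inner_self_eq_norm_sq, h₁, one_pow]
  have he₂ : inner ℝ e₂ e₂ = (1 : ℝ) := by rw [real_inner_self_eq_norm_sq, h₂, one_pow]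
  simp only [inner_sub_left, inner_sub_right, inner_add_left, inner_add_right,
    real_inner_smul_left, real_inner_smul_right, real_inner_comm u, real_inner_comm e₁ e₂,
    h₁₂, he₁, he₂]
  linear_combination hu

theorem LinearMap.IsSymmetric.norm_map_of_involutive {V : Type*} [NormedAddCommGroup V]
    [InnerProductSpace ℝ V] {A : V →ₗ[ℝ] V} (hA : A.IsSymmetric) (hA2 : ∀ v, A (A v) = v)
    (v : V) : ‖A v‖ = ‖v‖ := by
  rw [norm_eq_sqrt_real_inner, norm_eq_sqrt_real_inner, hA, hA2]

/-- `exp (t • J) = cos t + sin t • J`, i.e. multiplication by `e^{it}` for the complex structure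
`J`. -/
noncomputable def jRotate {V : Type*} [AddCommGroup V] [Module ℝ V] (J : V →ₗ[ℝ] V) (t : ℝ)
    (v : V) : V :=
  Real.cos t • v + Real.sin t • J v

section Module

variable {V : Type*} [AddCommGroup V] [Module ℝ V] {J : V →ₗ[ℝ] V}

theorem jRotate_jRotate (hJ2 : ∀ v, J (J v) = -v) (s t : ℝ) (v : V) :
    jRotate J s (jRotate J t v) = jRotate J (s + t) v := by
  simp only [jRotate, map_add, map_smul, hJ2, Real.cos_add, Real.sin_add]
  module

theorem jRotate_zero (v : V) : jRotate J 0 v = v := by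
  simp [jRotate]

theorem map_jRotate_of_anticomm {A : V →ₗ[ℝ] V} (hAJ : ∀ v, A (J v) = -J (A v)) (t : ℝ)
    (v : V) : A (jRotate J t v) = jRotate J (-t) (A v) := by
  simp only [jRotate, map_add, map_smul, hAJ, Real.cos_neg, Real.sin_neg]
  module

end Module

section InnerProductSpace

variable {V : Type*} [NormedAddCommGroup V] [InnerProductSpace ℝ V] {J : V →ₗ[ℝ] V}

theorem inner_apply_self_eq_zero_of_skew
    (hJorth : ∀ v w, inner ℝ (J v) w = -(inner ℝ v (J w) : ℝ)) (v : V) :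
    inner ℝ (J v) v = (0 : ℝ) := by
  have h := hJorth v v
  rw [real_inner_comm (J v) v] at h
  linarith

theorem norm_apply_eq_of_skew_of_sq_eq_neg (hJ2 : ∀ v, J (J v) = -v)
    (hJorth : ∀ v w, inner ℝ (J v) w = -(inner ℝ v (J w) : ℝ)) (v : V) : ‖J v‖ = ‖v‖ := by
  rw [norm_eq_sqrt_real_inner, norm_eq_sqrt_real_inner, hJorth, hJ2, inner_neg_right, neg_neg]

variable (hJ2 : ∀ v, J (J v) = -v) (hJorth : ∀ v w, inner ℝ (J v) w = -(inner ℝ v (J w) : ℝ))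
include hJ2 hJorth

theorem norm_jRotate (t : ℝ) (v : V) : ‖jRotate J t v‖ = ‖v‖ := by
  have hJv := norm_apply_eq_of_skew_of_sq_eq_neg hJ2 hJorth v
  have hvJv : inner ℝ v (J v) = (0 : ℝ) := by
    rw [real_inner_comm]; exact inner_apply_self_eq_zero_of_skew hJorth v
  rw [← sq_eq_sq₀ (norm_nonneg _) (norm_nonneg _), jRotate, norm_add_sq_real, norm_smul,
    norm_smul, real_inner_smul_left, real_inner_smul_right, hvJv, hJv, mul_pow, mul_pow,
    Real.norm_eq_abs, Real.norm_eq_abs, sq_abs, sq_abs]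
  linear_combination ‖v‖ ^ 2 * Real.cos_sq_add_sin_sq t

theorem exists_eq_jRotate_iff {u v : V} (hu : ‖u‖ = 1) (hv : ‖v‖ = 1) :
    (∃ φ, u = jRotate J φ v) ↔ inner ℝ u v ^ 2 + inner ℝ u (J v) ^ 2 = (1 : ℝ) := by
  have hJv := norm_apply_eq_of_skew_of_sq_eq_neg hJ2 hJorth v
  have hJvv := inner_apply_self_eq_zero_of_skew hJorth v
  have hvJv : inner ℝ v (J v) = (0 : ℝ) := by rw [real_inner_comm]; exact hJvv
  constructor
  · rintro ⟨φ, rfl⟩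
    have hvv : inner ℝ v v = (1 : ℝ) := by rw [real_inner_self_eq_norm_sq, hv, one_pow]
    have hJvJv : inner ℝ (J v) (J v) = (1 : ℝ) := by
      rw [real_inner_self_eq_norm_sq, hJv, hv, one_pow]
    simp only [jRotate, inner_add_left, real_inner_smul_left, hvv, hJvJv, hJvv, hvJv]
    linear_combination Real.cos_sq_add_sin_sq φ
  · intro h
    obtain ⟨φ, hcos, hsin⟩ := Real.exists_cos_sin_eq_of_sq_add_sq_eq_one h
    refine ⟨φ, ?_⟩
    rw [jRotate, hcos, hsin]
    exact eq_inner_smul_add_inner_smul_of_norm_sq hv (hJv.trans hv) hvJv (by rw [hu, one_pow, h])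

end InnerProductSpace

/-- Characterization of `𝔄`-principal singular tangent vectors (Lemma 2.1
(b) ⟺ (c)): for a unit vector `W`, `W = cos t • X + sin t • J X` for some unit
`X` in the `(+1)`-eigenspace of `A` iff `⟨AW,W⟩² + ⟨AW,JW⟩² = 1`. -/
theorem stmt_15 (V : Type*) [NormedAddCommGroup V] [InnerProductSpace ℝ V]
    (J A : V →ₗ[ℝ] V)
    (hJ2 : ∀ v, J (J v) = -v)
    (hJorth : ∀ v w, (inner ℝ (J v) w : ℝ) = - inner ℝ v (J w))
    (hA2 : ∀ v, A (A v) = v)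
    (hAsa : ∀ v w, (inner ℝ (A v) w : ℝ) = inner ℝ v (A w))
    (hAJ : ∀ v, A (J v) = - J (A v))
    (W : V) (hW : ‖W‖ = 1) :
    (∃ (t : ℝ) (X : V), ‖X‖ = 1 ∧ A X = X ∧
        W = Real.cos t • X + Real.sin t • J X) ↔
      (inner ℝ (A W) W : ℝ) ^ 2 + (inner ℝ (A W) (J W) : ℝ) ^ 2 = 1 := by
  have hAW : ‖A W‖ = 1 := (LinearMap.IsSymmetric.norm_map_of_involutive hAsa hA2 W).trans hW
  rw [← exists_eq_jRotate_iff hJ2 hJorth hAW hW]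
  constructor
  · rintro ⟨t, X, -, hAX, rfl⟩
    refine ⟨-(2 * t), ?_⟩
    change A (jRotate J t X) = jRotate J _ (jRotate J t X)
    rw [map_jRotate_of_anticomm hAJ, hAX, jRotate_jRotate hJ2]
    ring_nf
  · rintro ⟨φ, hφ⟩
    refine ⟨-(φ / 2), jRotate J (φ / 2) W, by rw [norm_jRotate hJ2 hJorth, hW], ?_, ?_⟩
    · rw [map_jRotate_of_anticomm hAJ, hφ, jRotate_jRotate hJ2]
      ring_nf
    · change W = jRotate J _ _
      rw [jRotate_jRotate hJ2, neg_add_cancel, jRotate_zero]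
end

section
/- Under the hypotheses of Lemma 3.1 of the paper (B the tangential part of a conjugation A with AN = V + fN, Bξ = -fξ + φV, BV = -fV, B²X = X - ⟨X,V⟩V, f² + g² + k² = 1 where g = ⟨V,ξ⟩, k = ‖V - gξ‖), one has BφV = (k² + g²)ξ + fφV - gV. -/
theorem LinearMap.apply_eq_of_apply_eq_neg_smul_add {R M : Type*} [CommRing R] [AddCommGroup M]
    [Module R M] (B : M →ₗ[R] M) {ξ w v : M} {f c : R}
    (hBξ : B ξ = -f • ξ + w) (hB2ξ : B (B ξ) = ξ - c • v) :
    B w = (1 - f ^ 2) • ξ + f • w - c • v := by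
  rw [hBξ, map_add, map_smul, hBξ] at hB2ξ
  linear_combination (norm := module) hB2ξ

theorem stmt_18_general (E : Type*) [NormedAddCommGroup E] [InnerProductSpace ℝ E]
    (B φ : E →ₗ[ℝ] E) (ξ V : E) (f g k : ℝ)
    (hBξ : B ξ = -f • ξ + φ V)
    (hB2 : ∀ X, B (B X) = X - (inner ℝ X V : ℝ) • V)
    (hg : g = (inner ℝ V ξ : ℝ))
    (hfkg : f ^ 2 + g ^ 2 + k ^ 2 = 1) :
    B (φ V) = (k ^ 2 + g ^ 2) • ξ + f • φ V - g • V := by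
  have hB2ξ : B (B ξ) = ξ - g • V := by rw [hB2, hg, real_inner_comm]
  rw [B.apply_eq_of_apply_eq_neg_smul_add hBξ hB2ξ, show k ^ 2 + g ^ 2 = 1 - f ^ 2 by linarith]

/-- Lemma 3.1(c): `BφV = (k² + g²)ξ + fφV - gV`. -/
theorem stmt_18 (E : Type*) [NormedAddCommGroup E] [InnerProductSpace ℝ E]
    (B φ : E →ₗ[ℝ] E) (ξ V : E) (f g k : ℝ)
    (hBξ : B ξ = -f • ξ + φ V)
    (hBV : B V = -f • V)
    (hB2 : ∀ X, B (B X) = X - (inner ℝ X V : ℝ) • V)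
    (hg : g = (inner ℝ V ξ : ℝ))
    (hk : k = ‖V - g • ξ‖)
    (hfkg : f ^ 2 + g ^ 2 + k ^ 2 = 1) :
    B (φ V) = (k ^ 2 + g ^ 2) • ξ + f • φ V - g • V :=
  stmt_18_general E B φ ξ V f g k hBξ hB2 hg hfkg
end
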